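/- For every integer L ≥ 1, the series Σ_{s≥1} (−1)^{s+1} q^s/(q^s;q)_{L+1} has non-negative power series coefficients; equivalently, for every N ≥ 1, the sum of (−1)^{s(π)+1} over partitions π of N with l(π) − s(π) ≤ L is non-negative. -/

import Mathlib

/-!
Since `1 / (q^s; q)_{L+1}` generates the partitions into parts from `s, …, s + L`, the
coefficient of `q^N` is `∑ₛ (-1)^{s+1} Aₛ`, where `Aₛ` counts the partitions of `N` with
smallest part `s` and largest part at most `s + L`. Hence it suffices that
`A₁ ≥ ∑_{s ≥ 2} Aₛ`. This follows from an injection: lower the parts of a partition with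
smallest part `s ≥ 2` so that the smallest becomes `1`, and restore the size with parts `1`;
dividing the number of parts `1` with remainder by the number of parts recovers `s`.
-/

open PowerSeries

/-- `(q^s; q)_n` as a formal power series in `q = X` over `ℚ`. -/
noncomputable def qp (s n : ℕ) : PowerSeries ℚ :=
  ∏ i ∈ Finset.range n, (1 - (X : PowerSeries ℚ) ^ (s + i))

open Finset

lemma exists_eq_cons {α : Type*} {n : ℕ} (f : Fin (n + 1) → α) : ∃ a g, f = Fin.cons a g :=
  ⟨f 0, Fin.tail f, (Fin.cons_self_tail f).symm⟩

lemma exists_eq_cons_cons {α : Type*} {K : ℕ} (f : Fin (K + 2) → α) :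
    ∃ a b h, f = Fin.cons a (Fin.cons b h) := by
  obtain ⟨a, g, rfl⟩ := exists_eq_cons f
  obtain ⟨b, h, rfl⟩ := exists_eq_cons g
  exact ⟨a, b, h, rfl⟩

lemma sum_Icc_neg_one_pow_mul_nonneg {R : Type*} [Ring R] [LinearOrder R] [IsOrderedRing R]
    {a : ℕ → R} (ha : ∀ s, 0 ≤ a s) {N : ℕ} (hle : ∑ s ∈ Icc 2 N, a s ≤ a 1) :
    0 ≤ ∑ s ∈ Icc 1 N, (-1) ^ (s + 1) * a s := by
  rcases Nat.eq_zero_or_pos N with rfl | hN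
  · simp
  calc 0 ≤ a 1 - ∑ s ∈ Icc 2 N, a s := sub_nonneg.mpr hle
    _ ≤ a 1 + ∑ s ∈ Icc 2 N, (-1) ^ (s + 1) * a s := by
      rw [sub_eq_add_neg, ← sum_neg_distrib]
      gcongr with s
      rcases neg_one_pow_eq_or R (s + 1) with h | h <;> simp [h, ha s]
    _ = ∑ s ∈ Icc 1 N, (-1) ^ (s + 1) * a s := by
      rw [← insert_Icc_add_one_left_eq_Icc (show 1 ≤ N from hN), sum_insert (by simp)]
      norm_num

/-- The size of the partition having `f i` parts equal to `s + i`. -/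
def partWeight {n : ℕ} (s : ℕ) (f : Fin n → ℕ) : ℕ :=
  ∑ i, (s + i) * f i

def windowPartitions (s n N : ℕ) : Finset (Fin n → ℕ) :=
  {f ∈ Fintype.piFinset fun _ => range (N + 1) | partWeight s f = N}

section partWeight

variable {n : ℕ} (s : ℕ)

lemma partWeight_cons (a : ℕ) (f : Fin n → ℕ) :
    partWeight s (Fin.cons a f : Fin (n + 1) → ℕ) = s * a + partWeight (s + 1) f := by
  simp only [partWeight, Fin.sum_univ_succ, Fin.cons_zero, Fin.cons_succ, Fin.val_zero,
    Fin.val_succ, add_zero]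
  congr 1
  exact sum_congr rfl fun i _ => by ring

lemma partWeight_add (t : ℕ) (f : Fin n → ℕ) :
    partWeight (s + t) f = t * ∑ i, f i + partWeight s f := by
  simp only [partWeight, mul_sum, ← sum_add_distrib]
  exact sum_congr rfl fun i _ => by ring

end partWeight

lemma mem_windowPartitions {s n N : ℕ} (hs : 0 < s) {f : Fin n → ℕ} :
    f ∈ windowPartitions s n N ↔ partWeight s f = N := by
  refine ⟨fun h => (mem_filter.mp h).2, fun h => mem_filter.mpr ⟨?_, h⟩⟩
  refine Fintype.mem_piFinset.mpr fun i => mem_range_succ_iff.mpr ?_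
  calc f i ≤ (s + i) * f i := Nat.le_mul_of_pos_left _ (by omega)
    _ ≤ partWeight s f := single_le_sum (f := fun j : Fin n => (s + (j : ℕ)) * f j)
          (fun _ _ => Nat.zero_le _) (mem_univ i)
    _ = N := h

/-- Split according to whether a part `s` occurs; if it does, remove one copy. -/
lemma card_windowPartitions_succ {s : ℕ} (hs : 0 < s) (n N : ℕ) :
    #(windowPartitions s (n + 1) N) =
      #(windowPartitions (s + 1) n N) +
        if s ≤ N then #(windowPartitions s (n + 1) (N - s)) else 0 := by
  rw [← card_filter_add_card_filter_not (fun f : Fin (n + 1) → ℕ => f 0 = 0)]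
  congr 1
  · refine card_nbij' Fin.tail (fun g => Fin.cons 0 g) ?_ ?_ ?_ ?_
    · intro f hf
      obtain ⟨a, g, rfl⟩ := exists_eq_cons f
      obtain ⟨hw, rfl⟩ := by simpa [mem_windowPartitions hs, partWeight_cons] using hf
      simpa [mem_windowPartitions (Nat.succ_pos s)] using hw
    · intro g hg
      simp_all [mem_windowPartitions, partWeight_cons]
    · intro f hf
      obtain ⟨a, g, rfl⟩ := exists_eq_cons f
      simp_all
    · intro g _
      simp
  · split_ifs with hsN
    · refine card_nbij' (fun f => Fin.cons (f 0 - 1) (Fin.tail f))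
        (fun g => Fin.cons (g 0 + 1) (Fin.tail g)) ?_ ?_ ?_ ?_
      · intro f hf
        obtain ⟨a, g, rfl⟩ := exists_eq_cons f
        obtain ⟨hw, ha⟩ := by simpa [mem_windowPartitions hs, partWeight_cons] using hf
        obtain ⟨a, rfl⟩ := Nat.exists_eq_add_one_of_ne_zero ha
        simp only [Fin.cons_zero, Fin.tail_cons, add_tsub_cancel_right]
        rw [mem_coe, mem_windowPartitions hs, partWeight_cons, ← hw, mul_add_one]
        omega
      · intro f hf
        obtain ⟨a, g, rfl⟩ := exists_eq_cons f
        rw [mem_coe, mem_windowPartitions hs, partWeight_cons] at hf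
        simp only [Fin.cons_zero, Fin.tail_cons]
        rw [mem_coe, mem_filter, mem_windowPartitions hs, partWeight_cons, mul_add_one]
        exact ⟨by omega, by simp⟩
      · intro f hf
        obtain ⟨a, g, rfl⟩ := exists_eq_cons f
        have ha : a ≠ 0 := by simp_all
        simp [Nat.sub_add_cancel (Nat.one_le_iff_ne_zero.mpr ha)]
      · intro g _
        obtain ⟨a, g, rfl⟩ := exists_eq_cons g
        simp
    · refine card_eq_zero.mpr (filter_eq_empty_iff.mpr fun f hf ha => ?_)
      obtain ⟨a, g, rfl⟩ := exists_eq_cons f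
      rw [mem_windowPartitions hs, partWeight_cons] at hf
      have := Nat.le_mul_of_pos_right s (Nat.pos_of_ne_zero ha)
      simp only [Fin.cons_zero] at this
      omega

noncomputable def windowSeries (s n : ℕ) : PowerSeries ℚ :=
  mk fun N => (#(windowPartitions s n N) : ℚ)

lemma qp_succ (s n : ℕ) : qp s (n + 1) = (1 - X ^ s) * qp (s + 1) n := by
  rw [qp, prod_range_succ', add_zero, mul_comm, qp]
  congr 1
  exact prod_congr rfl fun i _ => by rw [add_assoc, add_comm 1]

lemma one_sub_X_pow_mul_windowSeries {s : ℕ} (hs : 0 < s) (n : ℕ) :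
    (1 - X ^ s) * windowSeries s (n + 1) = windowSeries (s + 1) n := by
  ext N
  rw [sub_mul, one_mul, map_sub, coeff_X_pow_mul']
  simp only [windowSeries, coeff_mk]
  rw [card_windowPartitions_succ hs]
  split_ifs <;> push_cast <;> ring

lemma qp_mul_windowSeries (n : ℕ) : ∀ {s : ℕ}, 0 < s → qp s n * windowSeries s n = 1 := by
  induction n with
  | zero =>
    intro s _
    ext N
    rcases N with _ | N <;> simp [qp, windowSeries, windowPartitions, partWeight, coeff_one]
  | succ n ih =>
    intro s hs
    rw [qp_succ, mul_comm (1 - X ^ s), mul_assoc, one_sub_X_pow_mul_windowSeries hs]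
    exact ih s.succ_pos

lemma inv_qp {s : ℕ} (hs : 0 < s) (n : ℕ) : (qp s n)⁻¹ = windowSeries s n := by
  have h := qp_mul_windowSeries n hs
  have h0 : constantCoeff (qp s n) ≠ 0 := by
    refine left_ne_zero_of_mul_eq_one (b := constantCoeff (windowSeries s n)) ?_
    rw [← map_mul, h, map_one]
  exact ((eq_inv_iff_mul_eq_one h0).mpr (by rw [mul_comm, h])).symm

/-- Sends a partition with smallest part `s ≥ 2` (one part `s` not recorded in `f`) to one
with smallest part `1`: parts above `s` drop by `s - 1`, the recorded parts `s` become `2`,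
and the lost size is made up with parts `1`. With `R` parts in all, of which `S` exceed `s`,
the number of recorded parts `1` is `S + R (s - 2) + 1` with `S < R`, which recovers
`s` and `S`. -/
def shiftToOne {K : ℕ} (s : ℕ) (f : Fin (K + 2) → ℕ) : Fin (K + 2) → ℕ :=
  let S := f 1 + ∑ i, Fin.tail (Fin.tail f) i
  Fin.cons (S + (f 0 + 1 + S) * (s - 2) + 1) (Fin.cons (f 0 + f 1) (Fin.tail (Fin.tail f)))

lemma partWeight_shiftToOne {K s : ℕ} (hs : 2 ≤ s) (f : Fin (K + 2) → ℕ) :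
    partWeight 1 (shiftToOne s f) + 1 = partWeight s f + s := by
  obtain ⟨t, rfl⟩ := Nat.exists_eq_add_of_le' hs
  obtain ⟨a, b, h, rfl⟩ := exists_eq_cons_cons f
  simp only [shiftToOne, partWeight_cons, Fin.cons_zero, Fin.cons_one, Fin.tail_cons,
    add_tsub_cancel_right]
  rw [show t + 2 + 1 + 1 = 1 + 1 + 1 + (t + 1) by ring, partWeight_add (1 + 1 + 1)]
  ring

lemma shiftToOne_injective {K s s' : ℕ} (hs : 2 ≤ s) (hs' : 2 ≤ s') {f f' : Fin (K + 2) → ℕ}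
    (heq : shiftToOne s f = shiftToOne s' f') : s = s' ∧ f = f' := by
  obtain ⟨a, b, h, rfl⟩ := exists_eq_cons_cons f
  obtain ⟨a', b', h', rfl⟩ := exists_eq_cons_cons f'
  simp only [shiftToOne, Fin.cons_zero, Fin.cons_one, Fin.tail_cons, Fin.cons_inj] at heq
  obtain ⟨hones, hab, rfl⟩ := heq
  set R := a + 1 + (b + ∑ i, h i)
  have hR : a' + 1 + (b' + ∑ i, h i) = R := by omega
  rw [hR] at hones
  have hR0 : 0 < R := by omega
  have hq := (Nat.div_mod_unique (a := b + ∑ i, h i + R * (s - 2)) (c := b + ∑ i, h i)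
    (d := s - 2) hR0).mpr ⟨rfl, by omega⟩
  have hq' := (Nat.div_mod_unique (a := b + ∑ i, h i + R * (s - 2)) (c := b' + ∑ i, h i)
    (d := s' - 2) hR0).mpr ⟨by omega, by omega⟩
  obtain rfl : b = b' := by omega
  obtain rfl : a = a' := by omega
  exact ⟨by omega, rfl⟩

lemma sum_card_windowPartitions_le (K N : ℕ) :
    ∑ s ∈ Icc 2 N, #(windowPartitions s (K + 2) (N - s)) ≤
      #(windowPartitions 1 (K + 2) (N - 1)) := by
  rw [← card_sigma]
  refine card_le_card_of_injOn (fun p => shiftToOne p.1 p.2) ?_ ?_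
  · rintro ⟨s, f⟩ hp
    simp only [coe_sigma, Set.mem_sigma_iff, mem_coe, mem_Icc] at hp
    obtain ⟨⟨hs, hsN⟩, hf⟩ := hp
    rw [mem_windowPartitions (by omega)] at hf
    rw [mem_coe, mem_windowPartitions one_pos]
    dsimp only
    have := partWeight_shiftToOne hs f
    omega
  · rintro ⟨s, f⟩ hp ⟨s', f'⟩ hp' heq
    simp only [coe_sigma, Set.mem_sigma_iff, mem_coe, mem_Icc] at hp hp'
    obtain ⟨rfl, rfl⟩ := shiftToOne_injective hp.1.1 hp'.1.1 heq
    rfl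

lemma coeff_neg_one_pow_mul_X_pow_mul_inv_qp {s n N : ℕ} (hs : 0 < s) (hsN : s ≤ N) :
    coeff N ((-1) ^ (s + 1) * X ^ s * (qp s n)⁻¹) =
      (-1) ^ (s + 1) * (#(windowPartitions s n (N - s)) : ℚ) := by
  rw [inv_qp hs, mul_assoc, ← map_one C, ← map_neg, ← map_pow, coeff_C_mul, coeff_X_pow_mul',
    if_pos hsN, windowSeries, coeff_mk]

/-- The summand indexed by `s` has order at least `s` in `q`, so the coefficient of `q^N` of
the series is the finite sum over `1 ≤ s ≤ N`. -/
theorem stmt10 (L : ℕ) (hL : 1 ≤ L) (N : ℕ) :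
    0 ≤ ∑ s ∈ Finset.Icc 1 N,
        coeff N ((-1) ^ (s + 1) * (X : PowerSeries ℚ) ^ s * (qp s (L + 1))⁻¹) := by
  obtain ⟨K, rfl⟩ : ∃ K, L = K + 1 := ⟨L - 1, by omega⟩
  rw [sum_congr rfl fun s hs => coeff_neg_one_pow_mul_X_pow_mul_inv_qp
    (mem_Icc.mp hs).1 (mem_Icc.mp hs).2]
  refine sum_Icc_neg_one_pow_mul_nonneg (fun s => by positivity) ?_
  exact_mod_cast sum_card_windowPartitions_le K N
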